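/- Property [B] holds for the Invincible Fighter: for u = 1 and every fixed t ≥ 0, the function n ↦ K(n,t) is non-decreasing in n. -/
import Mathlib


open Real MeasureTheory Filter Topology

/-- Auxiliary history-based recursion: `Nhist a u n m t` equals `N(m,t)` when `m ≤ n`. -/
noncomputable def Nhist (a : ℕ → ℝ) (u : ℝ) : ℕ → ℕ → ℝ → ℝ
  | 0, _, _ => 0
  | n + 1, m, t =>
      if m ≤ n then Nhist a u n m t
      else (Finset.Icc 1 (n + 1)).sup'
          (Finset.nonempty_Icc.mpr (Nat.succ_le_succ (Nat.zero_le n)))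
          (fun j => a j + (a j * (1 - u) + u) *
            (Real.exp (-t) * ∫ x in (0:ℝ)..t, Nhist a u n (n + 1 - j) x * Real.exp x))

/-- `Nval a u n t` is `N(n,t)`, the optimal expected number of enemy planes shot down,
with `N(0,t) = 0` and `N(n,t) = max_{1 ≤ j ≤ n} N_n(j,t)`. -/
noncomputable def Nval (a : ℕ → ℝ) (u : ℝ) (n : ℕ) (t : ℝ) : ℝ :=
  Nhist a u n n t

/-- `Nstar a u r t` is `N*(r,t) = e^{-t} ∫_0^t N(r,x) e^x dx` (so `N*(0,t) = 0`). -/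
noncomputable def Nstar (a : ℕ → ℝ) (u : ℝ) (r : ℕ) (t : ℝ) : ℝ :=
  Real.exp (-t) * ∫ x in (0:ℝ)..t, Nval a u r x * Real.exp x

/-- `Nalloc a u n j t` is `N_n(j,t) = a(j) + c(j)·N*(n-j,t)` where `c(j) = a(j)(1-u)+u`. -/
noncomputable def Nalloc (a : ℕ → ℝ) (u : ℝ) (n j : ℕ) (t : ℝ) : ℝ :=
  a j + (a j * (1 - u) + u) * Nstar a u (n - j) t

/-- `Kopt a u n t = min { j ∈ {1,…,n} : N_n(j,t) = N(n,t) }`. -/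
noncomputable def Kopt (a : ℕ → ℝ) (u : ℝ) (n : ℕ) (t : ℝ) : ℕ :=
  sInf {j : ℕ | 1 ≤ j ∧ j ≤ n ∧ Nalloc a u n j t = Nval a u n t}

/-! ### Auxiliary lemmas -/

lemma Nhist_stable (a : ℕ → ℝ) (u : ℝ) :
    ∀ n m : ℕ, m ≤ n → ∀ t, Nhist a u n m t = Nval a u m t := by
  intro n
  induction n with
  | zero => intro m hm t; interval_cases m; rfl
  | succ n ih =>
    intro m hm t
    rcases Nat.lt_or_ge m (n+1) with h | h
    · rw [Nhist, if_pos (Nat.lt_succ_iff.mp h)]; exact ih m (Nat.lt_succ_iff.mp h) t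
    · have : m = n + 1 := le_antisymm hm h
      subst this; rfl

lemma Nval_zero (a : ℕ → ℝ) (u : ℝ) (t : ℝ) : Nval a u 0 t = 0 := rfl

lemma Nstar_zero (a : ℕ → ℝ) (u : ℝ) (t : ℝ) : Nstar a u 0 t = 0 := by
  simp [Nstar, Nval, Nhist]

lemma Nval_succ_eq_sup' (a : ℕ → ℝ) (u : ℝ) (n : ℕ) (t : ℝ) :
    Nval a u (n+1) t = (Finset.Icc 1 (n+1)).sup'
      (Finset.nonempty_Icc.mpr (Nat.succ_le_succ (Nat.zero_le n)))
      (fun j => Nalloc a u (n+1) j t) := by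
  show Nhist a u (n+1) (n+1) t = _
  rw [Nhist, if_neg (by omega)]
  refine Finset.sup'_congr _ rfl ?_
  intro j hj
  simp only [Finset.mem_Icc] at hj
  have hfun : (fun x => Nhist a u n (n + 1 - j) x * Real.exp x)
      = fun x => Nval a u (n + 1 - j) x * Real.exp x := by
    funext x
    rw [Nhist_stable a u n (n+1-j) (by omega) x]
  rw [hfun]
  rfl

lemma Nalloc_one (a : ℕ → ℝ) (n j : ℕ) (t : ℝ) :
    Nalloc a 1 n j t = a j + Nstar a 1 (n - j) t := by
  simp [Nalloc]

lemma Nalloc_le_Nval (a : ℕ → ℝ) (u : ℝ) (n j : ℕ) (hj1 : 1 ≤ j) (hj2 : j ≤ n) (t : ℝ) :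
    Nalloc a u n j t ≤ Nval a u n t := by
  obtain ⟨m, rfl⟩ : ∃ m, n = m + 1 := ⟨n - 1, by omega⟩
  rw [Nval_succ_eq_sup']
  exact Finset.le_sup' (fun i => Nalloc a u (m+1) i t) (Finset.mem_Icc.mpr ⟨hj1, hj2⟩)

lemma Nval_exists_alloc (a : ℕ → ℝ) (u : ℝ) (n : ℕ) (hn : 1 ≤ n) (t : ℝ) :
    ∃ j, 1 ≤ j ∧ j ≤ n ∧ Nalloc a u n j t = Nval a u n t := by
  obtain ⟨m, rfl⟩ : ∃ m, n = m + 1 := ⟨n - 1, by omega⟩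
  obtain ⟨j, hj, hval⟩ := Finset.exists_mem_eq_sup'
    (s := Finset.Icc 1 (m+1)) (Finset.nonempty_Icc.mpr (Nat.succ_le_succ (Nat.zero_le m)))
    (fun j : ℕ => Nalloc a u (m+1) j t)
  simp only [Finset.mem_Icc] at hj
  exact ⟨j, hj.1, hj.2, by rw [Nval_succ_eq_sup', hval]⟩

/-! ### Continuity -/

lemma Nstar_continuous (a : ℕ → ℝ) (u : ℝ) (r : ℕ)
    (hc : Continuous (fun x => Nval a u r x)) :
    Continuous (fun t => Nstar a u r t) := by
  unfold Nstar
  exact (Real.continuous_exp.comp continuous_neg).mul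
    (intervalIntegral.continuous_primitive
      (fun p q => ((hc.mul Real.continuous_exp).intervalIntegrable p q)) 0)

lemma Nval_continuous (a : ℕ → ℝ) (u : ℝ) : ∀ n, Continuous (fun t => Nval a u n t) := by
  intro n
  induction n using Nat.strong_induction_on with
  | _ n ih =>
    match n with
    | 0 => exact continuous_const
    | n + 1 =>
      have : (fun t => Nval a u (n+1) t) = fun t => (Finset.Icc 1 (n+1)).sup'
          (Finset.nonempty_Icc.mpr (Nat.succ_le_succ (Nat.zero_le n)))
          (fun j => Nalloc a u (n+1) j t) := by
        funext t; exact Nval_succ_eq_sup' a u n t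
      rw [this]
      refine Continuous.finset_sup'_apply _ (fun j hj => ?_)
      simp only [Finset.mem_Icc] at hj
      unfold Nalloc
      exact continuous_const.add (continuous_const.mul
        (Nstar_continuous a u (n+1-j) (ih (n+1-j) (by omega))))

lemma Nval_intable (a : ℕ → ℝ) (u : ℝ) (r : ℕ) (s t : ℝ) :
    IntervalIntegrable (fun x => Nval a u r x * Real.exp x) volume s t :=
  ((Nval_continuous a u r).mul Real.continuous_exp).intervalIntegrable s t

/-! ### Basic values -/

lemma Nval_one (a : ℕ → ℝ) (t : ℝ) : Nval a 1 1 t = a 1 := by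
  rw [show (1:ℕ) = 0 + 1 from rfl, Nval_succ_eq_sup']
  simp [Nalloc_one, Nstar_zero]

lemma Nstar_one_le (a : ℕ → ℝ) (ha : 0 ≤ a 1) (t : ℝ) (ht : 0 ≤ t) :
    Nstar a 1 1 t ≤ a 1 := by
  have : Nstar a 1 1 t = a 1 * (1 - Real.exp (-t)) := by
    unfold Nstar
    have : (fun x => Nval a 1 1 x * Real.exp x) = fun x => a 1 * Real.exp x := by
      funext x; rw [Nval_one]
    rw [this, intervalIntegral.integral_const_mul, integral_exp]
    rw [Real.exp_zero, Real.exp_neg]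
    have hpos : Real.exp t ≠ 0 := (Real.exp_pos t).ne'
    field_simp
  rw [this]
  have h1 : 0 ≤ Real.exp (-t) := (Real.exp_pos _).le
  have h2 : Real.exp (-t) ≤ 1 := Real.exp_le_one_iff.mpr (by linarith)
  nlinarith

/-! ### Concavity -/

/-- One-step integration of concavity from `Nval` to `Nstar`. -/
lemma Nstar_concave_step (a : ℕ → ℝ) (u : ℝ) (r : ℕ)
    (h : ∀ y, 0 ≤ y → Nval a u (r+2) y + Nval a u r y ≤ 2 * Nval a u (r+1) y)
    (t : ℝ) (ht : 0 ≤ t) :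
    Nstar a u (r+2) t + Nstar a u r t ≤ 2 * Nstar a u (r+1) t := by
  unfold Nstar
  rw [← mul_add, show (2:ℝ) * (Real.exp (-t) * ∫ x in (0:ℝ)..t, Nval a u (r+1) x * Real.exp x)
    = Real.exp (-t) * (2 * ∫ x in (0:ℝ)..t, Nval a u (r+1) x * Real.exp x) by ring]
  refine mul_le_mul_of_nonneg_left ?_ (Real.exp_pos _).le
  rw [← intervalIntegral.integral_add (Nval_intable a u (r+2) 0 t) (Nval_intable a u r 0 t),
    ← intervalIntegral.integral_const_mul]
  refine intervalIntegral.integral_mono_on ht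
    ((Nval_intable a u (r+2) 0 t).add (Nval_intable a u r 0 t))
    ((Nval_intable a u (r+1) 0 t).const_mul 2) ?_
  intro x hx
  have hx0 : 0 ≤ x := hx.1
  have hex : 0 ≤ Real.exp x := (Real.exp_pos _).le
  nlinarith [h x hx0]

/-- Monotone decreasing differences for `Nstar`. -/
lemma Nstar_diff_mono (a : ℕ → ℝ) (u : ℝ) (n : ℕ)
    (H : ∀ r, r < n → ∀ t, 0 ≤ t → Nstar a u (r+2) t + Nstar a u r t ≤ 2 * Nstar a u (r+1) t) :
    ∀ p, p ≤ n → ∀ q, q ≤ p → ∀ t, 0 ≤ t →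
      Nstar a u (p+1) t - Nstar a u p t ≤ Nstar a u (q+1) t - Nstar a u q t := by
  intro p
  induction p with
  | zero => intro _ q hq t ht; interval_cases q; exact le_refl _
  | succ p ih =>
    intro hp q hq t ht
    rcases Nat.lt_or_ge q (p+1) with h | h
    · have h1 := H p (by omega) t ht
      have h2 := ih (by omega) q (by omega) t ht
      linarith
    · have : q = p + 1 := le_antisymm hq h
      subst this; exact le_refl _

/-- Concavity of differences of `a`. -/
lemma a_diff_mono (a : ℕ → ℝ) (hconc : ∀ j : ℕ, a (j + 2) - a (j + 1) < a (j + 1) - a j) :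
    ∀ i j : ℕ, i ≤ j → a (j+1) - a j ≤ a (i+1) - a i := by
  intro i j hij
  induction j with
  | zero => interval_cases i; exact le_refl _
  | succ j ih =>
    rcases Nat.lt_or_ge i (j+1) with h | h
    · have := hconc j
      have := ih (by omega)
      linarith
    · have : i = j + 1 := le_antisymm hij h
      subst this; exact le_refl _

/-- Key lemma: for the invincible fighter, `n ↦ N(n,x)` is concave. -/
lemma Nval_concave (a : ℕ → ℝ) (haI : ∀ j, a j ∈ Set.Icc (0:ℝ) 1) (ha0 : a 0 = 0)
    (hconc : ∀ j : ℕ, a (j + 2) - a (j + 1) < a (j + 1) - a j) :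
    ∀ n : ℕ, ∀ x : ℝ, 0 ≤ x →
      Nval a 1 (n+2) x + Nval a 1 n x ≤ 2 * Nval a 1 (n+1) x := by
  intro n
  induction n using Nat.strong_induction_on with
  | _ n ih =>
    match n with
    | 0 =>
      -- base case : N(2,x) ≤ 2 N(1,x) = 2 a 1
      intro x hx
      rw [Nval_zero, Nval_one, show (0:ℕ)+2 = 1+1 from rfl, Nval_succ_eq_sup']
      rw [add_zero]
      refine Finset.sup'_le _ _ (fun j hj => ?_)
      simp only [Finset.mem_Icc] at hj
      obtain ⟨hj1, hj2⟩ := hj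
      interval_cases j
      · rw [Nalloc_one]
        have := Nstar_one_le a (haI 1).1 x hx
        norm_num
        linarith
      · rw [Nalloc_one]
        simp only [Nat.sub_self, Nstar_zero, add_zero]
        have := hconc 0
        rw [ha0] at this
        linarith
    | n + 1 =>
      intro x hx
      -- optimal j for level n+3, optimal k for level n+1
      obtain ⟨j, hj1, hj2, hj⟩ := Nval_exists_alloc a 1 (n+3) (by omega) x
      obtain ⟨k, hk1, hk2, hk⟩ := Nval_exists_alloc a 1 (n+1) (by omega) x
      -- star concavity available up to level n+1
      have Hstar : ∀ r, r < n + 1 → ∀ t, 0 ≤ t →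
          Nstar a 1 (r+2) t + Nstar a 1 r t ≤ 2 * Nstar a 1 (r+1) t := by
        intro r hr t ht
        exact Nstar_concave_step a 1 r (fun y hy => ih r (by omega) y hy) t ht
      have hdiff := Nstar_diff_mono a 1 (n+1) Hstar
      rcases le_or_gt j (k+1) with hcase | hcase
      · -- Case B: j ≤ k+1, candidates j and k at level n+2
        set p := n + 2 - j with hp
        set q := n + 1 - k with hq
        have hpq : q ≤ p := by omega
        have hpn : p ≤ n + 1 := by omega
        have e1 : n + 3 - j = p + 1 := by omega
        have e2 : n + 2 - k = q + 1 := by omega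
        have c1 : Nalloc a 1 (n+2) j x ≤ Nval a 1 (n+2) x :=
          Nalloc_le_Nval a 1 (n+2) j hj1 (by omega) x
        have c2 : Nalloc a 1 (n+2) k x ≤ Nval a 1 (n+2) x :=
          Nalloc_le_Nval a 1 (n+2) k hk1 (by omega) x
        have hd := hdiff p hpn q hpq x hx
        rw [Nalloc_one, e1] at hj
        rw [Nalloc_one] at hk
        rw [Nalloc_one] at c1 c2
        rw [e2] at c2
        -- note n+2-j = p (by hp), n+1-k = q
        rw [← hp] at c1
        rw [← hq] at hk
        linarith
      · -- Case A: j ≥ k+2, candidates j-1 and k+1 at level n+2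
        obtain ⟨j', rfl⟩ : ∃ j', j = j' + 1 := ⟨j - 1, by omega⟩
        have ha' : a (j'+1) - a j' ≤ a (k+1) - a k :=
          a_diff_mono a hconc k j' (by omega)
        have c1 : Nalloc a 1 (n+2) j' x ≤ Nval a 1 (n+2) x :=
          Nalloc_le_Nval a 1 (n+2) j' (by omega) (by omega) x
        have c2 : Nalloc a 1 (n+2) (k+1) x ≤ Nval a 1 (n+2) x :=
          Nalloc_le_Nval a 1 (n+2) (k+1) (by omega) (by omega) x
        have e1 : n + 2 - j' = n + 3 - (j' + 1) := by omega
        have e2 : n + 2 - (k + 1) = n + 1 - k := by omega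
        rw [Nalloc_one] at hj hk c1 c2
        rw [e1] at c1
        rw [e2] at c2
        linarith

/-! ### Monotonicity of the optimal allocation -/

lemma Kopt_mem (a : ℕ → ℝ) (u : ℝ) (n : ℕ) (hn : 1 ≤ n) (t : ℝ) :
    1 ≤ Kopt a u n t ∧ Kopt a u n t ≤ n ∧
      Nalloc a u n (Kopt a u n t) t = Nval a u n t := by
  have hne : {j : ℕ | 1 ≤ j ∧ j ≤ n ∧ Nalloc a u n j t = Nval a u n t}.Nonempty := by
    obtain ⟨j, h1, h2, h3⟩ := Nval_exists_alloc a u n hn t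
    exact ⟨j, h1, h2, h3⟩
  exact Nat.sInf_mem hne

lemma Kopt_step (a : ℕ → ℝ) (haI : ∀ j, a j ∈ Set.Icc (0:ℝ) 1) (ha0 : a 0 = 0)
    (hconc : ∀ j : ℕ, a (j + 2) - a (j + 1) < a (j + 1) - a j)
    (t : ℝ) (ht : 0 ≤ t) (n : ℕ) (hn : 1 ≤ n) :
    Kopt a 1 n t ≤ Kopt a 1 (n+1) t := by
  by_contra hlt
  push_neg at hlt
  obtain ⟨hk1, hk2, hk3⟩ := Kopt_mem a 1 n hn t
  obtain ⟨hk'1, hk'2, hk'3⟩ := Kopt_mem a 1 (n+1) (by omega) t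
  set k := Kopt a 1 n t
  set k' := Kopt a 1 (n+1) t
  -- k' < k ≤ n
  have hk'n : k' ≤ n := by omega
  -- Nalloc (n+1) k' ≥ Nalloc (n+1) k
  have h1 : Nalloc a 1 (n+1) k t ≤ Nalloc a 1 (n+1) k' t := by
    rw [hk'3]
    exact Nalloc_le_Nval a 1 (n+1) k hk1 (by omega) t
  -- star concavity (global)
  have Hstar : ∀ r, r < n → ∀ s, 0 ≤ s →
      Nstar a 1 (r+2) s + Nstar a 1 r s ≤ 2 * Nstar a 1 (r+1) s := fun r _ s hs =>
    Nstar_concave_step a 1 r (fun y hy => Nval_concave a haI ha0 hconc r y hy) s hs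
  have hd := Nstar_diff_mono a 1 n Hstar (n - k') (by omega) (n - k) (by omega) t ht
  have e1 : n - k' + 1 = n + 1 - k' := by omega
  have e2 : n - k + 1 = n + 1 - k := by omega
  rw [e1, e2] at hd
  -- Nalloc n k' ≥ Nalloc n k = Nval n
  have h2 : Nalloc a 1 n k t ≤ Nalloc a 1 n k' t := by
    rw [Nalloc_one, Nalloc_one]
    rw [Nalloc_one, Nalloc_one] at h1
    linarith
  have h3 : Nalloc a 1 n k' t = Nval a 1 n t :=
    le_antisymm (Nalloc_le_Nval a 1 n k' (by omega) hk'n t) (by rw [← hk3]; exact h2)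
  -- so k' is in the set for level n, contradicting minimality
  have : k ≤ k' := Nat.sInf_le ⟨by omega, hk'n, h3⟩
  omega

/-- Theorem 4.2 ([B] for the Invincible Fighter): for `u = 1` and every fixed `t ≥ 0`,
`n ↦ K(n,t)` is non-decreasing. -/
theorem invincible_B
    (a : ℕ → ℝ) (haI : ∀ j, a j ∈ Set.Icc (0:ℝ) 1) (ha0 : a 0 = 0)
    (hmono : StrictMono a)
    (hconc : ∀ j : ℕ, a (j + 2) - a (j + 1) < a (j + 1) - a j) :
    ∀ t : ℝ, 0 ≤ t → ∀ m n : ℕ, 1 ≤ m → m ≤ n → Kopt a 1 m t ≤ Kopt a 1 n t := by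
  intro t ht m n hm hmn
  induction n with
  | zero => omega
  | succ n ihn =>
    rcases Nat.lt_or_ge m (n+1) with h | h
    · have h1 := ihn (by omega)
      have h2 := Kopt_step a haI ha0 hconc t ht n (by omega)
      omega
    · have : m = n + 1 := le_antisymm hmn h
      subst this; exact le_refl _
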